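/- Theorem 2: Any fully separable tripartite state ρ = Σ_k p_k |e_k⟩⟨e_k| ⊗ |f_k⟩⟨f_k| ⊗ |g_k⟩⟨g_k| satisfies F(ρ, A+B+C) ≤ ½[Δ(A−B)²_{ρ_AB} + Δ(A−C)²_{ρ_AC} + Δ(B−C)²_{ρ_BC}] for all local Hermitian observables A, B, C, where A+B+C := A⊗I⊗I + I⊗B⊗I + I⊗I⊗C. -/
import Mathlib


open Matrix Kronecker

noncomputable def varM {n : Type*} [Fintype n] (ρ A : Matrix n n ℂ) : ℝ :=
  ((ρ * A * A).trace).re - (((ρ * A).trace).re) ^ 2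

noncomputable def varV {n : Type*} [Fintype n] (ψ : n → ℂ) (A : Matrix n n ℂ) : ℝ :=
  (star ψ ⬝ᵥ (A * A).mulVec ψ).re - ((star ψ ⬝ᵥ A.mulVec ψ).re) ^ 2

/-- The product vector `|e⟩⊗|f⟩⊗|g⟩` on `(a × b) × c`. -/
def prodVec3 {a b c : Type*} (e : a → ℂ) (f : b → ℂ) (g : c → ℂ) : (a × b) × c → ℂ :=
  fun x => e x.1.1 * f x.1.2 * g x.2

/-- Reduced state on the first two factors: partial trace over `c`. -/
noncomputable def redAB {a b c : Type*} [Fintype c]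
    (ρ : Matrix ((a × b) × c) ((a × b) × c) ℂ) : Matrix (a × b) (a × b) ℂ :=
  fun x y => ∑ k : c, ρ (x, k) (y, k)

/-- Reduced state on the first and third factors: partial trace over `b`. -/
noncomputable def redAC {a b c : Type*} [Fintype b]
    (ρ : Matrix ((a × b) × c) ((a × b) × c) ℂ) : Matrix (a × c) (a × c) ℂ :=
  fun x y => ∑ j : b, ρ ((x.1, j), x.2) ((y.1, j), y.2)

/-- Reduced state on the last two factors: partial trace over `a`. -/
noncomputable def redBC {a b c : Type*} [Fintype a]
    (ρ : Matrix ((a × b) × c) ((a × b) × c) ℂ) : Matrix (b × c) (b × c) ℂ :=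
  fun x y => ∑ i : a, ρ ((i, x.1), x.2) ((i, y.1), y.2)

/-! ### Auxiliary lemmas -/

def prodVec2' {a b : Type*} (e : a → ℂ) (f : b → ℂ) : a × b → ℂ :=
  fun x => e x.1 * f x.2

lemma sum3_rev' {M : Type*} [AddCommMonoid M] {a b c : Type*} [Fintype a] [Fintype b] [Fintype c]
    (F : a → b → c → M) :
    ∑ i, ∑ j, ∑ k, F i j k = ∑ k, ∑ j, ∑ i, F i j k :=
  calc ∑ i, ∑ j, ∑ k, F i j k
      = ∑ j, ∑ i, ∑ k, F i j k := Finset.sum_comm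
    _ = ∑ j, ∑ k, ∑ i, F i j k := Finset.sum_congr rfl fun _ _ => Finset.sum_comm
    _ = ∑ k, ∑ j, ∑ i, F i j k := Finset.sum_comm

lemma trace_vecMulVec_mul' {n : Type*} [Fintype n] (u : n → ℂ) (Y : Matrix n n ℂ) :
    (vecMulVec u (star u) * Y).trace = star u ⬝ᵥ Y.mulVec u := by
  simp only [Matrix.trace, Matrix.diag_apply, Matrix.mul_apply, vecMulVec_apply,
    dotProduct, mulVec, Pi.star_apply, Finset.mul_sum]
  rw [Finset.sum_comm]
  exact Finset.sum_congr rfl fun y _ => Finset.sum_congr rfl fun x _ => by ring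

lemma herm_dot_real' {n : Type*} [Fintype n] {M : Matrix n n ℂ} (hM : M.IsHermitian)
    (v : n → ℂ) : ((star v ⬝ᵥ M.mulVec v).re : ℂ) = star v ⬝ᵥ M.mulVec v := by
  rw [← Complex.conj_eq_iff_re]
  show star (star v ⬝ᵥ M.mulVec v) = star v ⬝ᵥ M.mulVec v
  rw [← star_dotProduct (M.mulVec v) v, star_mulVec, hM.eq, ← dotProduct_mulVec]

lemma mulVec_prodVec3' {a b c : Type*} [Fintype a] [Fintype b] [Fintype c]
    (P : Matrix a a ℂ) (Q : Matrix b b ℂ) (R : Matrix c c ℂ)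
    (e : a → ℂ) (f : b → ℂ) (g : c → ℂ) :
    ((P ⊗ₖ Q) ⊗ₖ R).mulVec (prodVec3 e f g) = prodVec3 (P.mulVec e) (Q.mulVec f) (R.mulVec g) := by
  funext x
  simp only [mulVec, dotProduct, prodVec3, kroneckerMap_apply, Fintype.sum_prod_type,
    Finset.sum_mul, Finset.mul_sum]
  rw [sum3_rev']
  exact Finset.sum_congr rfl fun i _ => Finset.sum_congr rfl fun j _ =>
    Finset.sum_congr rfl fun k _ => by ring

lemma dot_prodVec3' {a b c : Type*} [Fintype a] [Fintype b] [Fintype c]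
    (e u : a → ℂ) (f v : b → ℂ) (g w : c → ℂ) :
    star (prodVec3 e f g) ⬝ᵥ prodVec3 u v w = (star e ⬝ᵥ u) * (star f ⬝ᵥ v) * (star g ⬝ᵥ w) := by
  simp only [dotProduct, prodVec3, Pi.star_apply, Fintype.sum_prod_type, Finset.sum_mul,
    Finset.mul_sum, star_mul']
  rw [sum3_rev']
  exact Finset.sum_congr rfl fun i _ => Finset.sum_congr rfl fun j _ =>
    Finset.sum_congr rfl fun k _ => by ring

lemma mulVec_prodVec2' {a b : Type*} [Fintype a] [Fintype b]
    (P : Matrix a a ℂ) (Q : Matrix b b ℂ) (e : a → ℂ) (f : b → ℂ) :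
    (P ⊗ₖ Q).mulVec (prodVec2' e f) = prodVec2' (P.mulVec e) (Q.mulVec f) := by
  funext x
  simp only [mulVec, dotProduct, prodVec2', kroneckerMap_apply, Fintype.sum_prod_type,
    Finset.sum_mul, Finset.mul_sum]
  rw [Finset.sum_comm]
  exact Finset.sum_congr rfl fun i _ => Finset.sum_congr rfl fun j _ => by ring

lemma dot_prodVec2'' {a b : Type*} [Fintype a] [Fintype b]
    (e u : a → ℂ) (f v : b → ℂ) :
    star (prodVec2' e f) ⬝ᵥ prodVec2' u v = (star e ⬝ᵥ u) * (star f ⬝ᵥ v) := by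
  simp only [dotProduct, prodVec2', Pi.star_apply, Fintype.sum_prod_type, Finset.sum_mul,
    Finset.mul_sum, star_mul']
  rw [Finset.sum_comm]
  exact Finset.sum_congr rfl fun i _ => Finset.sum_congr rfl fun j _ => by ring

lemma exp_pair_sub {a b : Type*} [Fintype a] [Fintype b] [DecidableEq a] [DecidableEq b]
    {e : a → ℂ} {f : b → ℂ} (he : star e ⬝ᵥ e = 1) (hf : star f ⬝ᵥ f = 1)
    (P : Matrix a a ℂ) (Q : Matrix b b ℂ) :
    star (prodVec2' e f) ⬝ᵥ ((P ⊗ₖ (1 : Matrix b b ℂ) - (1 : Matrix a a ℂ) ⊗ₖ Q) *ᵥ prodVec2' e f)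
      = (star e ⬝ᵥ P *ᵥ e) - (star f ⬝ᵥ Q *ᵥ f) := by
  rw [sub_mulVec, dotProduct_sub, mulVec_prodVec2', mulVec_prodVec2', dot_prodVec2'',
    dot_prodVec2'', one_mulVec, one_mulVec, he, hf]
  ring

lemma exp_pair_sub_sq {a b : Type*} [Fintype a] [Fintype b] [DecidableEq a] [DecidableEq b]
    {e : a → ℂ} {f : b → ℂ} (he : star e ⬝ᵥ e = 1) (hf : star f ⬝ᵥ f = 1)
    (P : Matrix a a ℂ) (Q : Matrix b b ℂ) :
    star (prodVec2' e f) ⬝ᵥ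
      (((P ⊗ₖ (1 : Matrix b b ℂ) - (1 : Matrix a a ℂ) ⊗ₖ Q) *
        (P ⊗ₖ (1 : Matrix b b ℂ) - (1 : Matrix a a ℂ) ⊗ₖ Q)) *ᵥ prodVec2' e f)
      = (star e ⬝ᵥ (P * P) *ᵥ e) - 2 * ((star e ⬝ᵥ P *ᵥ e) * (star f ⬝ᵥ Q *ᵥ f))
        + (star f ⬝ᵥ (Q * Q) *ᵥ f) := by
  have hYY : (P ⊗ₖ (1 : Matrix b b ℂ) - (1 : Matrix a a ℂ) ⊗ₖ Q) *
      (P ⊗ₖ (1 : Matrix b b ℂ) - (1 : Matrix a a ℂ) ⊗ₖ Q)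
      = (P * P) ⊗ₖ (1 : Matrix b b ℂ) - P ⊗ₖ Q - P ⊗ₖ Q + (1 : Matrix a a ℂ) ⊗ₖ (Q * Q) := by
    simp only [sub_mul, mul_sub, ← mul_kronecker_mul, Matrix.one_mul, Matrix.mul_one]
    abel
  rw [hYY]
  simp only [sub_mulVec, add_mulVec, dotProduct_sub, dotProduct_add, mulVec_prodVec2',
    dot_prodVec2'', one_mulVec, he, hf, mul_one, one_mul]
  ring

lemma varV_tri {a b c : Type*} [Fintype a] [Fintype b] [Fintype c]
    [DecidableEq a] [DecidableEq b] [DecidableEq c]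
    {A : Matrix a a ℂ} {B : Matrix b b ℂ} {C : Matrix c c ℂ}
    (hA : A.IsHermitian) (hB : B.IsHermitian) (hC : C.IsHermitian)
    {e : a → ℂ} {f : b → ℂ} {g : c → ℂ}
    (he : star e ⬝ᵥ e = 1) (hf : star f ⬝ᵥ f = 1) (hg : star g ⬝ᵥ g = 1) :
    varV (prodVec3 e f g)
      ((A ⊗ₖ (1 : Matrix b b ℂ)) ⊗ₖ (1 : Matrix c c ℂ) +
       ((1 : Matrix a a ℂ) ⊗ₖ B) ⊗ₖ (1 : Matrix c c ℂ) +
       ((1 : Matrix a a ℂ) ⊗ₖ (1 : Matrix b b ℂ)) ⊗ₖ C)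
      = ((star e ⬝ᵥ (A * A) *ᵥ e).re - (star e ⬝ᵥ A *ᵥ e).re ^ 2)
        + ((star f ⬝ᵥ (B * B) *ᵥ f).re - (star f ⬝ᵥ B *ᵥ f).re ^ 2)
        + ((star g ⬝ᵥ (C * C) *ᵥ g).re - (star g ⬝ᵥ C *ᵥ g).re ^ 2) := by
  have hAA : (A * A).IsHermitian := by
    rw [Matrix.IsHermitian, Matrix.conjTranspose_mul, hA.eq]
  have hBB : (B * B).IsHermitian := by
    rw [Matrix.IsHermitian, Matrix.conjTranspose_mul, hB.eq]
  have hCC : (C * C).IsHermitian := by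
    rw [Matrix.IsHermitian, Matrix.conjTranspose_mul, hC.eq]
  have hXX : ((A ⊗ₖ (1 : Matrix b b ℂ)) ⊗ₖ (1 : Matrix c c ℂ) +
        ((1 : Matrix a a ℂ) ⊗ₖ B) ⊗ₖ (1 : Matrix c c ℂ) +
        ((1 : Matrix a a ℂ) ⊗ₖ (1 : Matrix b b ℂ)) ⊗ₖ C) *
       ((A ⊗ₖ (1 : Matrix b b ℂ)) ⊗ₖ (1 : Matrix c c ℂ) +
        ((1 : Matrix a a ℂ) ⊗ₖ B) ⊗ₖ (1 : Matrix c c ℂ) +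
        ((1 : Matrix a a ℂ) ⊗ₖ (1 : Matrix b b ℂ)) ⊗ₖ C)
      = ((A * A) ⊗ₖ (1 : Matrix b b ℂ)) ⊗ₖ (1 : Matrix c c ℂ) +
        ((1 : Matrix a a ℂ) ⊗ₖ (B * B)) ⊗ₖ (1 : Matrix c c ℂ) +
        ((1 : Matrix a a ℂ) ⊗ₖ (1 : Matrix b b ℂ)) ⊗ₖ (C * C) +
        (A ⊗ₖ B) ⊗ₖ (1 : Matrix c c ℂ) + (A ⊗ₖ B) ⊗ₖ (1 : Matrix c c ℂ) +
        (A ⊗ₖ (1 : Matrix b b ℂ)) ⊗ₖ C + (A ⊗ₖ (1 : Matrix b b ℂ)) ⊗ₖ C +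
        ((1 : Matrix a a ℂ) ⊗ₖ B) ⊗ₖ C + ((1 : Matrix a a ℂ) ⊗ₖ B) ⊗ₖ C := by
    simp only [add_mul, mul_add, ← mul_kronecker_mul, Matrix.one_mul, Matrix.mul_one]
    abel
  rw [varV, hXX]
  simp only [add_mulVec, dotProduct_add, mulVec_prodVec3', dot_prodVec3', one_mulVec,
    he, hf, hg, mul_one, one_mul]
  rw [← herm_dot_real' hA e, ← herm_dot_real' hB f, ← herm_dot_real' hC g,
    ← herm_dot_real' hAA e, ← herm_dot_real' hBB f, ← herm_dot_real' hCC g]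
  simp only [← Complex.ofReal_mul, ← Complex.ofReal_add, Complex.ofReal_re]
  ring

lemma cs_ineq' {M : ℕ} (p m : Fin M → ℝ) (hp : ∀ k, 0 ≤ p k) (hp1 : ∑ k, p k = 1) :
    (∑ k, p k * m k) ^ 2 ≤ ∑ k, p k * m k ^ 2 := by
  have h := Finset.sum_mul_sq_le_sq_mul_sq Finset.univ
    (fun k => Real.sqrt (p k)) (fun k => Real.sqrt (p k) * m k)
  have e1 : ∀ k : Fin M, Real.sqrt (p k) * (Real.sqrt (p k) * m k) = p k * m k := fun k => by
    rw [← mul_assoc, Real.mul_self_sqrt (hp k)]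
  have e2 : ∀ k : Fin M, Real.sqrt (p k) ^ 2 = p k := fun k => Real.sq_sqrt (hp k)
  have e3 : ∀ k : Fin M, (Real.sqrt (p k) * m k) ^ 2 = p k * m k ^ 2 := fun k => by
    rw [mul_pow, e2]
  simp only [e1, e2, e3] at h
  rwa [hp1, one_mul] at h

lemma redAB_decomp {a b c : Type*} [Fintype a] [Fintype b] [Fintype c] {M : ℕ}
    (p : Fin M → ℝ) (e : Fin M → a → ℂ) (f : Fin M → b → ℂ) (g : Fin M → c → ℂ)
    (hg : ∀ k, star (g k) ⬝ᵥ g k = 1) :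
    redAB (∑ k, (p k : ℂ) •
        vecMulVec (prodVec3 (e k) (f k) (g k)) (star (prodVec3 (e k) (f k) (g k))))
      = ∑ k, (p k : ℂ) • vecMulVec (prodVec2' (e k) (f k)) (star (prodVec2' (e k) (f k))) := by
  funext x y
  simp only [redAB, Matrix.sum_apply, Matrix.smul_apply, vecMulVec_apply,
    prodVec3, prodVec2', Pi.star_apply, smul_eq_mul, star_mul']
  rw [Finset.sum_comm]
  refine Finset.sum_congr rfl fun k _ => ?_
  conv_rhs => rw [← one_mul ((p k : ℂ) * _), ← hg k]
  simp only [dotProduct, Pi.star_apply, Finset.sum_mul]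
  exact Finset.sum_congr rfl fun ci _ => by ring

lemma redAC_decomp {a b c : Type*} [Fintype a] [Fintype b] [Fintype c] {M : ℕ}
    (p : Fin M → ℝ) (e : Fin M → a → ℂ) (f : Fin M → b → ℂ) (g : Fin M → c → ℂ)
    (hf : ∀ k, star (f k) ⬝ᵥ f k = 1) :
    redAC (∑ k, (p k : ℂ) •
        vecMulVec (prodVec3 (e k) (f k) (g k)) (star (prodVec3 (e k) (f k) (g k))))
      = ∑ k, (p k : ℂ) • vecMulVec (prodVec2' (e k) (g k)) (star (prodVec2' (e k) (g k))) := by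
  funext x y
  simp only [redAC, Matrix.sum_apply, Matrix.smul_apply, vecMulVec_apply,
    prodVec3, prodVec2', Pi.star_apply, smul_eq_mul, star_mul']
  rw [Finset.sum_comm]
  refine Finset.sum_congr rfl fun k _ => ?_
  conv_rhs => rw [← one_mul ((p k : ℂ) * _), ← hf k]
  simp only [dotProduct, Pi.star_apply, Finset.sum_mul]
  exact Finset.sum_congr rfl fun j _ => by ring

lemma redBC_decomp {a b c : Type*} [Fintype a] [Fintype b] [Fintype c] {M : ℕ}
    (p : Fin M → ℝ) (e : Fin M → a → ℂ) (f : Fin M → b → ℂ) (g : Fin M → c → ℂ)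
    (he : ∀ k, star (e k) ⬝ᵥ e k = 1) :
    redBC (∑ k, (p k : ℂ) •
        vecMulVec (prodVec3 (e k) (f k) (g k)) (star (prodVec3 (e k) (f k) (g k))))
      = ∑ k, (p k : ℂ) • vecMulVec (prodVec2' (f k) (g k)) (star (prodVec2' (f k) (g k))) := by
  funext x y
  simp only [redBC, Matrix.sum_apply, Matrix.smul_apply, vecMulVec_apply,
    prodVec3, prodVec2', Pi.star_apply, smul_eq_mul, star_mul']
  rw [Finset.sum_comm]
  refine Finset.sum_congr rfl fun k _ => ?_
  conv_rhs => rw [← one_mul ((p k : ℂ) * _), ← he k]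
  simp only [dotProduct, Pi.star_apply, Finset.sum_mul]
  exact Finset.sum_congr rfl fun i _ => by ring
lemma varM_pair {a b : Type*} [Fintype a] [Fintype b] [DecidableEq a] [DecidableEq b]
    {M : ℕ} (p : Fin M → ℝ) (u : Fin M → a → ℂ) (v : Fin M → b → ℂ)
    (hu : ∀ k, star (u k) ⬝ᵥ u k = 1) (hv : ∀ k, star (v k) ⬝ᵥ v k = 1)
    (P : Matrix a a ℂ) (Q : Matrix b b ℂ) (hP : P.IsHermitian) (hQ : Q.IsHermitian) :
    varM (∑ k, (p k : ℂ) • vecMulVec (prodVec2' (u k) (v k)) (star (prodVec2' (u k) (v k))))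
        (P ⊗ₖ (1 : Matrix b b ℂ) - (1 : Matrix a a ℂ) ⊗ₖ Q)
      = (∑ k, p k * (((star (u k) ⬝ᵥ (P * P) *ᵥ u k).re - (star (u k) ⬝ᵥ P *ᵥ u k).re ^ 2)
          + ((star (v k) ⬝ᵥ (Q * Q) *ᵥ v k).re - (star (v k) ⬝ᵥ Q *ᵥ v k).re ^ 2)
          + ((star (u k) ⬝ᵥ P *ᵥ u k).re - (star (v k) ⬝ᵥ Q *ᵥ v k).re) ^ 2))
        - (∑ k, p k * ((star (u k) ⬝ᵥ P *ᵥ u k).re - (star (v k) ⬝ᵥ Q *ᵥ v k).re)) ^ 2 := by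
  have hP2 : (P * P).IsHermitian := by
    rw [Matrix.IsHermitian, Matrix.conjTranspose_mul, hP.eq]
  have hQ2 : (Q * Q).IsHermitian := by
    rw [Matrix.IsHermitian, Matrix.conjTranspose_mul, hQ.eq]
  have htr : ∀ Z : Matrix (a × b) (a × b) ℂ,
      ((∑ k, (p k : ℂ) • vecMulVec (prodVec2' (u k) (v k)) (star (prodVec2' (u k) (v k)))) * Z).trace
        = ∑ k, (p k : ℂ) * (star (prodVec2' (u k) (v k)) ⬝ᵥ Z *ᵥ prodVec2' (u k) (v k)) := by
    intro Z
    rw [Finset.sum_mul, trace_sum]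
    exact Finset.sum_congr rfl fun k _ => by
      rw [smul_mul_assoc, trace_smul, trace_vecMulVec_mul', smul_eq_mul]
  rw [varM, Matrix.mul_assoc, htr, htr]
  have h1 : ∑ k, (p k : ℂ) * (star (prodVec2' (u k) (v k)) ⬝ᵥ
        (P ⊗ₖ (1 : Matrix b b ℂ) - (1 : Matrix a a ℂ) ⊗ₖ Q) *ᵥ prodVec2' (u k) (v k))
      = ((∑ k, p k * ((star (u k) ⬝ᵥ P *ᵥ u k).re - (star (v k) ⬝ᵥ Q *ᵥ v k).re) : ℝ) : ℂ) := by
    push_cast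
    refine Finset.sum_congr rfl fun k _ => ?_
    rw [exp_pair_sub (hu k) (hv k) P Q, ← herm_dot_real' hP (u k), ← herm_dot_real' hQ (v k)]
    simp only [Complex.ofReal_re]
  have h2 : ∑ k, (p k : ℂ) * (star (prodVec2' (u k) (v k)) ⬝ᵥ
        ((P ⊗ₖ (1 : Matrix b b ℂ) - (1 : Matrix a a ℂ) ⊗ₖ Q) *
         (P ⊗ₖ (1 : Matrix b b ℂ) - (1 : Matrix a a ℂ) ⊗ₖ Q)) *ᵥ prodVec2' (u k) (v k))
      = ((∑ k, p k * (((star (u k) ⬝ᵥ (P * P) *ᵥ u k).re - (star (u k) ⬝ᵥ P *ᵥ u k).re ^ 2)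
          + ((star (v k) ⬝ᵥ (Q * Q) *ᵥ v k).re - (star (v k) ⬝ᵥ Q *ᵥ v k).re ^ 2)
          + ((star (u k) ⬝ᵥ P *ᵥ u k).re - (star (v k) ⬝ᵥ Q *ᵥ v k).re) ^ 2) : ℝ) : ℂ) := by
    push_cast
    refine Finset.sum_congr rfl fun k _ => ?_
    rw [exp_pair_sub_sq (hu k) (hv k) P Q, ← herm_dot_real' hP (u k), ← herm_dot_real' hQ (v k),
      ← herm_dot_real' hP2 (u k), ← herm_dot_real' hQ2 (v k)]
    simp only [Complex.ofReal_re]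
    ring
  rw [h1, h2, Complex.ofReal_re, Complex.ofReal_re]

/-- Theorem 2: any fully separable tripartite state
`ρ = Σ_k p_k |e_k⟩⟨e_k|⊗|f_k⟩⟨f_k|⊗|g_k⟩⟨g_k|` satisfies
`F(ρ, A+B+C) ≤ ½[Δ(A−B)²_{ρ_AB} + Δ(A−C)²_{ρ_AC} + Δ(B−C)²_{ρ_BC}]`, where `F` is any
quantity satisfying the convex-roof upper bound over pure decompositions of `ρ`. -/
theorem tripartite_separable_qfi_bound {a b c : Type*}
    [Fintype a] [Fintype b] [Fintype c] [DecidableEq a] [DecidableEq b] [DecidableEq c]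
    {M : ℕ} (p : Fin M → ℝ) (hp : ∀ k, 0 ≤ p k) (hp1 : ∑ k, p k = 1)
    (e : Fin M → a → ℂ) (f : Fin M → b → ℂ) (g : Fin M → c → ℂ)
    (he : ∀ k, star (e k) ⬝ᵥ e k = 1) (hf : ∀ k, star (f k) ⬝ᵥ f k = 1)
    (hg : ∀ k, star (g k) ⬝ᵥ g k = 1)
    (ρ : Matrix ((a × b) × c) ((a × b) × c) ℂ)
    (hρ : ρ = ∑ k, (p k : ℂ) •
      vecMulVec (prodVec3 (e k) (f k) (g k)) (star (prodVec3 (e k) (f k) (g k))))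
    (A : Matrix a a ℂ) (B : Matrix b b ℂ) (C : Matrix c c ℂ)
    (hA : A.IsHermitian) (hB : B.IsHermitian) (hC : C.IsHermitian)
    (F : ℝ)
    (hF : ∀ (K : ℕ) (q : Fin K → ℝ) (ψ : Fin K → (a × b) × c → ℂ),
      (∀ k, 0 ≤ q k) → (∑ k, q k = 1) → (∀ k, star (ψ k) ⬝ᵥ ψ k = 1) →
      ρ = ∑ k, (q k : ℂ) • vecMulVec (ψ k) (star (ψ k)) →
      F ≤ ∑ k, q k * varV (ψ k)
        ((A ⊗ₖ (1 : Matrix b b ℂ)) ⊗ₖ (1 : Matrix c c ℂ) +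
         ((1 : Matrix a a ℂ) ⊗ₖ B) ⊗ₖ (1 : Matrix c c ℂ) +
         ((1 : Matrix a a ℂ) ⊗ₖ (1 : Matrix b b ℂ)) ⊗ₖ C)) :
    F ≤ (1 / 2) *
      (varM (redAB ρ) (A ⊗ₖ (1 : Matrix b b ℂ) - (1 : Matrix a a ℂ) ⊗ₖ B) +
       varM (redAC ρ) (A ⊗ₖ (1 : Matrix c c ℂ) - (1 : Matrix a a ℂ) ⊗ₖ C) +
       varM (redBC ρ) (B ⊗ₖ (1 : Matrix c c ℂ) - (1 : Matrix b b ℂ) ⊗ₖ C)) := by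
  have hnorm : ∀ k, star (prodVec3 (e k) (f k) (g k)) ⬝ᵥ prodVec3 (e k) (f k) (g k) = 1 :=
    fun k => by rw [dot_prodVec3', he k, hf k, hg k]; ring
  have hkey := hF M p (fun k => prodVec3 (e k) (f k) (g k)) hp hp1 hnorm hρ
  have hFle : F ≤ ∑ k, p k * (((star (e k) ⬝ᵥ (A * A) *ᵥ e k).re - (star (e k) ⬝ᵥ A *ᵥ e k).re ^ 2) + ((star (f k) ⬝ᵥ (B * B) *ᵥ f k).re - (star (f k) ⬝ᵥ B *ᵥ f k).re ^ 2) + ((star (g k) ⬝ᵥ (C * C) *ᵥ g k).re - (star (g k) ⬝ᵥ C *ᵥ g k).re ^ 2)) := by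
    refine hkey.trans_eq (Finset.sum_congr rfl fun k _ => ?_)
    rw [varV_tri hA hB hC (he k) (hf k) (hg k)]
  have hABeq : varM (redAB ρ) (A ⊗ₖ (1 : Matrix b b ℂ) - (1 : Matrix a a ℂ) ⊗ₖ B)
      = (∑ k, p k * (((star (e k) ⬝ᵥ (A * A) *ᵥ e k).re - (star (e k) ⬝ᵥ A *ᵥ e k).re ^ 2) + ((star (f k) ⬝ᵥ (B * B) *ᵥ f k).re - (star (f k) ⬝ᵥ B *ᵥ f k).re ^ 2) + ((star (e k) ⬝ᵥ A *ᵥ e k).re - (star (f k) ⬝ᵥ B *ᵥ f k).re) ^ 2)) - (∑ k, p k * ((star (e k) ⬝ᵥ A *ᵥ e k).re - (star (f k) ⬝ᵥ B *ᵥ f k).re)) ^ 2 := by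
    rw [show redAB ρ = ∑ k, (p k : ℂ) •
        vecMulVec (prodVec2' (e k) (f k)) (star (prodVec2' (e k) (f k))) from by
      rw [hρ]; exact redAB_decomp p e f g hg]
    exact varM_pair p e f he hf A B hA hB
  have hACeq : varM (redAC ρ) (A ⊗ₖ (1 : Matrix c c ℂ) - (1 : Matrix a a ℂ) ⊗ₖ C)
      = (∑ k, p k * (((star (e k) ⬝ᵥ (A * A) *ᵥ e k).re - (star (e k) ⬝ᵥ A *ᵥ e k).re ^ 2) + ((star (g k) ⬝ᵥ (C * C) *ᵥ g k).re - (star (g k) ⬝ᵥ C *ᵥ g k).re ^ 2) + ((star (e k) ⬝ᵥ A *ᵥ e k).re - (star (g k) ⬝ᵥ C *ᵥ g k).re) ^ 2)) - (∑ k, p k * ((star (e k) ⬝ᵥ A *ᵥ e k).re - (star (g k) ⬝ᵥ C *ᵥ g k).re)) ^ 2 := by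
    rw [show redAC ρ = ∑ k, (p k : ℂ) •
        vecMulVec (prodVec2' (e k) (g k)) (star (prodVec2' (e k) (g k))) from by
      rw [hρ]; exact redAC_decomp p e f g hf]
    exact varM_pair p e g he hg A C hA hC
  have hBCeq : varM (redBC ρ) (B ⊗ₖ (1 : Matrix c c ℂ) - (1 : Matrix b b ℂ) ⊗ₖ C)
      = (∑ k, p k * (((star (f k) ⬝ᵥ (B * B) *ᵥ f k).re - (star (f k) ⬝ᵥ B *ᵥ f k).re ^ 2) + ((star (g k) ⬝ᵥ (C * C) *ᵥ g k).re - (star (g k) ⬝ᵥ C *ᵥ g k).re ^ 2) + ((star (f k) ⬝ᵥ B *ᵥ f k).re - (star (g k) ⬝ᵥ C *ᵥ g k).re) ^ 2)) - (∑ k, p k * ((star (f k) ⬝ᵥ B *ᵥ f k).re - (star (g k) ⬝ᵥ C *ᵥ g k).re)) ^ 2 := by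
    rw [show redBC ρ = ∑ k, (p k : ℂ) •
        vecMulVec (prodVec2' (f k) (g k)) (star (prodVec2' (f k) (g k))) from by
      rw [hρ]; exact redBC_decomp p e f g he]
    exact varM_pair p f g hf hg B C hB hC
  rw [hABeq, hACeq, hBCeq]
  have csAB : (∑ k, p k * ((star (e k) ⬝ᵥ A *ᵥ e k).re - (star (f k) ⬝ᵥ B *ᵥ f k).re)) ^ 2 ≤ ∑ k, p k * ((star (e k) ⬝ᵥ A *ᵥ e k).re - (star (f k) ⬝ᵥ B *ᵥ f k).re) ^ 2 :=
    cs_ineq' p (fun k => ((star (e k) ⬝ᵥ A *ᵥ e k).re - (star (f k) ⬝ᵥ B *ᵥ f k).re)) hp hp1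
  have csAC : (∑ k, p k * ((star (e k) ⬝ᵥ A *ᵥ e k).re - (star (g k) ⬝ᵥ C *ᵥ g k).re)) ^ 2 ≤ ∑ k, p k * ((star (e k) ⬝ᵥ A *ᵥ e k).re - (star (g k) ⬝ᵥ C *ᵥ g k).re) ^ 2 :=
    cs_ineq' p (fun k => ((star (e k) ⬝ᵥ A *ᵥ e k).re - (star (g k) ⬝ᵥ C *ᵥ g k).re)) hp hp1
  have csBC : (∑ k, p k * ((star (f k) ⬝ᵥ B *ᵥ f k).re - (star (g k) ⬝ᵥ C *ᵥ g k).re)) ^ 2 ≤ ∑ k, p k * ((star (f k) ⬝ᵥ B *ᵥ f k).re - (star (g k) ⬝ᵥ C *ᵥ g k).re) ^ 2 :=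
    cs_ineq' p (fun k => ((star (f k) ⬝ᵥ B *ᵥ f k).re - (star (g k) ⬝ᵥ C *ᵥ g k).re)) hp hp1
  have hsum : (∑ k, p k * (((star (e k) ⬝ᵥ (A * A) *ᵥ e k).re - (star (e k) ⬝ᵥ A *ᵥ e k).re ^ 2) + ((star (f k) ⬝ᵥ (B * B) *ᵥ f k).re - (star (f k) ⬝ᵥ B *ᵥ f k).re ^ 2) + ((star (e k) ⬝ᵥ A *ᵥ e k).re - (star (f k) ⬝ᵥ B *ᵥ f k).re) ^ 2))
      + (∑ k, p k * (((star (e k) ⬝ᵥ (A * A) *ᵥ e k).re - (star (e k) ⬝ᵥ A *ᵥ e k).re ^ 2) + ((star (g k) ⬝ᵥ (C * C) *ᵥ g k).re - (star (g k) ⬝ᵥ C *ᵥ g k).re ^ 2) + ((star (e k) ⬝ᵥ A *ᵥ e k).re - (star (g k) ⬝ᵥ C *ᵥ g k).re) ^ 2))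
      + (∑ k, p k * (((star (f k) ⬝ᵥ (B * B) *ᵥ f k).re - (star (f k) ⬝ᵥ B *ᵥ f k).re ^ 2) + ((star (g k) ⬝ᵥ (C * C) *ᵥ g k).re - (star (g k) ⬝ᵥ C *ᵥ g k).re ^ 2) + ((star (f k) ⬝ᵥ B *ᵥ f k).re - (star (g k) ⬝ᵥ C *ᵥ g k).re) ^ 2))
      = 2 * (∑ k, p k * (((star (e k) ⬝ᵥ (A * A) *ᵥ e k).re - (star (e k) ⬝ᵥ A *ᵥ e k).re ^ 2) + ((star (f k) ⬝ᵥ (B * B) *ᵥ f k).re - (star (f k) ⬝ᵥ B *ᵥ f k).re ^ 2) + ((star (g k) ⬝ᵥ (C * C) *ᵥ g k).re - (star (g k) ⬝ᵥ C *ᵥ g k).re ^ 2)))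
        + (∑ k, p k * ((star (e k) ⬝ᵥ A *ᵥ e k).re - (star (f k) ⬝ᵥ B *ᵥ f k).re) ^ 2) + (∑ k, p k * ((star (e k) ⬝ᵥ A *ᵥ e k).re - (star (g k) ⬝ᵥ C *ᵥ g k).re) ^ 2) + (∑ k, p k * ((star (f k) ⬝ᵥ B *ᵥ f k).re - (star (g k) ⬝ᵥ C *ᵥ g k).re) ^ 2) := by
    simp only [← Finset.sum_add_distrib, Finset.mul_sum]
    exact Finset.sum_congr rfl fun k _ => by ring
  linarith [hFle, csAB, csAC, csBC, hsum]
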